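/- Let g be CN-war-stable with equal strengths and γ ≥ 1, and let i be a vertex of maximum degree with ij ∈ g. Then the closed neighborhoods of i and j cannot coincide except for each other: N_i(g)\{j} ≠ N_j(g)\{i}. -/

import Mathlib

open Finset

/-- The allies (neighbors) of `i` in network `g`, as a `Finset`. -/
noncomputable def nbrs {V : Type*} [Fintype V] (g : SimpleGraph V) (i : V) : Finset V :=
  @Finset.filter _ (fun j => g.Adj i j) (Classical.decPred _) Finset.univ

/-- The network `g` with the alliance `jk` added. -/
def addE {V : Type*} (g : SimpleGraph V) (j k : V) : SimpleGraph V :=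
  g ⊔ SimpleGraph.fromEdgeSet {s(j, k)}

/-- The network `g` with the alliance `jk` deleted. -/
def delE {V : Type*} (g : SimpleGraph V) (j k : V) : SimpleGraph V :=
  g.deleteEdges {s(j, k)}

/-- CN-vulnerability with uniform strengths `M C = |C|` and constant `γ`:
country `i` is CN-vulnerable at `g` if some clique `C` of `g` not containing `i`
satisfies `|C| > γ · (1 + |N_i(g) \ C|)`. -/
def CNVul {V : Type*} [Fintype V] [DecidableEq V] (g : SimpleGraph V) (γ : ℝ) (i : V) :
    Prop :=
  ∃ C : Finset V, g.IsClique ↑C ∧ i ∉ C ∧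
    γ * (1 + ((nbrs g i) \ C).card) < (C.card : ℝ)

/-- CN-war-stability: (S1) no country CN-vulnerable; (S2) no country CN-vulnerable after
adding any non-link; (S3) both endpoints of any link become CN-vulnerable upon its
deletion. -/
def CNWarStable {V : Type*} [Fintype V] [DecidableEq V] (g : SimpleGraph V) (γ : ℝ) :
    Prop :=
  (∀ v : V, ¬ CNVul g γ v) ∧
  (∀ j k : V, j ≠ k → ¬ g.Adj j k → ∀ v : V, ¬ CNVul (addE g j k) γ v) ∧
  (∀ j k : V, g.Adj j k → CNVul (delE g j k) γ j ∧ CNVul (delE g j k) γ k)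

/-!
Suppose `N_i \ {j} = N_j \ {i}` and let `C` be the clique that, by (S3), threatens `i` once
`ij` is cut, with `k = |(N_i \ {j}) \ C|` and `γ (1 + k) < |C|`. If `C \ {j} ⊆ N_i`, then
replacing `j` by `i` in `C` gives a clique of `g` threatening `j`, against (S1). Otherwise some
`v ∈ C` is not allied with `i`; after adding `iv`, the clique `{i, v} ∪ (N_i ∩ C)` would threaten
`j`, so (S2) forces `|N_i ∩ C| + 2 ≤ γ (1 + k) < |C|`. Since `deg v ≤ deg i`, `v` then has fewer
than `k` allies outside `C`, and `γ ≥ 1` makes `C \ {v}` threaten `v`, against (S1).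
-/

section

variable {V : Type*} {g : SimpleGraph V} {γ : ℝ} {i j v : V}

lemma isClique_insert_addE {s : Set V} (hs : g.IsClique s) (hv : v ∈ s)
    (hadj : ∀ x ∈ s, x ≠ v → g.Adj i x) : (addE g i v).IsClique (insert i s) := by
  refine (hs.mono le_sup_left).insert fun x hx hix => ?_
  by_cases hxv : x = v
  · subst hxv
    simp [hix]
  · exact le_sup_left (a := g) (hadj x hx hxv)

variable [Fintype V]

@[simp]
lemma mem_nbrs : v ∈ nbrs g i ↔ g.Adj i v := by
  simp [nbrs]

lemma nbrs_addE_of_ne (hji : j ≠ i) (hjv : j ≠ v) : nbrs (addE g i v) j = nbrs g j := by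
  ext x
  simp [addE, hji, hjv]

variable [DecidableEq V] {C : Finset V}

lemma nbrs_delE_left (g : SimpleGraph V) (i j : V) : nbrs (delE g i j) i = nbrs g i \ {j} := by
  ext x
  simp only [mem_nbrs, delE, SimpleGraph.deleteEdges_adj, Set.mem_singleton_iff, Sym2.eq_iff,
    mem_sdiff, mem_singleton]
  exact ⟨fun ⟨h, hne⟩ => ⟨h, fun hx => hne (Or.inl ⟨trivial, hx⟩)⟩,
    fun ⟨h, hx⟩ => ⟨h, by rintro (⟨-, rfl⟩ | ⟨rfl, rfl⟩) <;> simp_all⟩⟩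

lemma erase_subset_nbrs (hC : g.IsClique (C : Set V)) (hv : v ∈ C) : C.erase v ⊆ nbrs g v :=
  fun _ hx => mem_nbrs.2 (hC hv (mem_erase.1 hx).2 (mem_erase.1 hx).1.symm)

lemma card_le_of_not_cnVul (h : ¬ CNVul g γ v) (hC : g.IsClique (C : Set V)) (hvC : v ∉ C) :
    (C.card : ℝ) ≤ γ * (1 + (nbrs g v \ C).card) := by
  by_contra! hlt
  exact h ⟨C, hC, hvC, hlt⟩

lemma erase_subset_nbrs_of_subset (hC : g.IsClique (C : Set V)) (hjC : j ∈ C) (hiC : i ∉ C)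
    (hN : nbrs g j \ {i} ⊆ nbrs g i) : C.erase j ⊆ nbrs g i := fun _ hx =>
  hN (mem_sdiff.2 ⟨erase_subset_nbrs hC hjC hx,
    fun hxi => hiC (mem_of_mem_erase (mem_singleton.1 hxi ▸ hx))⟩)

lemma card_sub_one_le_of_not_cnVul (h : ¬ CNVul g γ v) (hC : g.IsClique (C : Set V))
    (hvC : v ∈ C) : (C.card : ℝ) - 1 ≤ γ * (2 + (nbrs g v).card - C.card) := by
  have hbound := card_le_of_not_cnVul h (hC.subset (coe_subset.2 (erase_subset v C)))
    (notMem_erase v C)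
  have hsplit := card_sdiff_add_card_eq_card (erase_subset_nbrs hC hvC)
  have herase : ((C.erase v).card : ℝ) = C.card - 1 := by
    rw [← card_erase_add_one hvC]; push_cast; ring
  have hdiff : ((nbrs g v \ C.erase v).card : ℝ) = (nbrs g v).card + 1 - C.card := by
    rw [← hsplit]; push_cast; linarith
  rw [hdiff, herase] at hbound
  linarith

lemma cnVul_of_erase_subset_nbrs (hC : g.IsClique (C : Set V)) (hiC : i ∉ C) (hij : i ≠ j)
    (hsub : C.erase j ⊆ nbrs g i)
    (hlt : γ * (1 + ((nbrs g j \ {i}) \ C).card) < C.card) : CNVul g γ j := by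
  have hiC' : i ∉ C.erase j := fun h => hiC (mem_of_mem_erase h)
  refine ⟨insert i (C.erase j), ?_, by simp [hij.symm], ?_⟩
  · rw [coe_insert]
    exact (hC.subset (coe_subset.2 (erase_subset j C))).insert
      fun _ hb _ => mem_nbrs.1 (hsub hb)
  · have hdiff : nbrs g j \ insert i (C.erase j) = (nbrs g j \ {i}) \ C := by
      ext x
      simp only [mem_sdiff, mem_insert, mem_erase, mem_singleton, mem_nbrs]
      constructor
      · rintro ⟨hx, hxC⟩
        simp only [not_or, not_and] at hxC
        exact ⟨⟨hx, hxC.1⟩, hxC.2 hx.ne.symm⟩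
      · rintro ⟨⟨hx, hxi⟩, hxC⟩
        exact ⟨hx, by tauto⟩
    have hcard : C.card ≤ (insert i (C.erase j)).card := by
      rw [card_insert_of_notMem hiC']
      exact Nat.le_succ_of_pred_le pred_card_le_card_erase
    rw [hdiff]
    exact hlt.trans_le (by exact_mod_cast hcard)

lemma cnVul_addE_of_not_mem_nbrs (hC : g.IsClique (C : Set V)) (hvC : v ∈ C) (hiC : i ∉ C)
    (hjC : j ∉ C) (hij : i ≠ j) (hvi : v ∉ nbrs g i) (hN : nbrs g j \ {i} ⊆ nbrs g i)
    (hlt : γ * (1 + ((nbrs g j \ {i}) \ C).card) < (nbrs g i ∩ C).card + 2) :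
    CNVul (addE g i v) γ j := by
  have hiv : i ≠ v := fun h => hiC (h ▸ hvC)
  have hjv : j ≠ v := fun h => hjC (h ▸ hvC)
  have hDC : insert v (nbrs g i ∩ C) ⊆ C := insert_subset hvC inter_subset_right
  have hiD : i ∉ insert v (nbrs g i ∩ C) := by simp [hiv, hiC]
  refine ⟨insert i (insert v (nbrs g i ∩ C)), ?_, by simp [hij.symm, hjv, hjC], ?_⟩
  · rw [coe_insert]
    refine isClique_insert_addE (hC.subset (coe_subset.2 hDC)) (by simp) fun x hx hxv => ?_
    simp only [coe_insert, Set.mem_insert_iff, coe_inter, Set.mem_inter_iff, mem_coe] at hx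
    exact mem_nbrs.1 (hx.resolve_left hxv).1
  · have hdiff : nbrs g j \ insert i (insert v (nbrs g i ∩ C)) = (nbrs g j \ {i}) \ C := by
      ext x
      simp only [mem_sdiff, mem_insert, mem_inter, mem_singleton, not_or, not_and]
      constructor
      · rintro ⟨hx, hxi, -, hxC⟩
        exact ⟨⟨hx, hxi⟩, fun h => hxC (hN (mem_sdiff.2 ⟨hx, by simpa⟩)) h⟩
      · rintro ⟨⟨hx, hxi⟩, hxC⟩
        have hxN : x ∈ nbrs g i := hN (mem_sdiff.2 ⟨hx, by simpa⟩)
        exact ⟨hx, hxi, fun h => hvi (h ▸ hxN), fun _ => hxC⟩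
    rw [nbrs_addE_of_ne hij.symm hjv, hdiff, card_insert_of_notMem hiD,
      card_insert_of_notMem fun h => hvi (mem_inter.1 h).1]
    push_cast
    linarith

lemma cnVul_of_mem_of_card_nbrs_le (hγ : 1 ≤ γ) (hC : g.IsClique (C : Set V)) (hvC : v ∈ C)
    {t k : ℕ} (hdeg : (nbrs g v).card ≤ t + k + 1) (ht : (t + 2 : ℝ) ≤ γ * (1 + k))
    (hk : γ * (1 + k) < C.card) : CNVul g γ v := by
  by_contra h
  have h_clique := card_sub_one_le_of_not_cnVul h hC hvC
  have htC : t + 3 ≤ C.card := by exact_mod_cast ht.trans_lt hk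
  have h_out : (2 + (nbrs g v).card - C.card : ℝ) ≤ k := by
    have : ((nbrs g v).card + 2 : ℝ) ≤ k + C.card := by exact_mod_cast (by omega)
    linarith
  nlinarith [mul_le_mul_of_nonneg_left h_out (by linarith : (0 : ℝ) ≤ γ)]

end

theorem claim_three_general {n : ℕ} (γ : ℝ) (hγ : 1 ≤ γ)
    (g : SimpleGraph (Fin n)) (hstable : CNWarStable g γ)
    (i j : Fin n) (hmax : ∀ v : Fin n, (nbrs g v).card ≤ (nbrs g i).card)
    (hij : g.Adj i j) :
    nbrs g i \ {j} ≠ nbrs g j \ {i} := by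
  intro htwin
  obtain ⟨hS1, hS2, hS3⟩ := hstable
  obtain ⟨C, hCdel, hiC, hlt⟩ := (hS3 i j hij).1
  have hC : g.IsClique (C : Set (Fin n)) := hCdel.mono (SimpleGraph.deleteEdges_le _)
  rw [nbrs_delE_left] at hlt
  have hN : nbrs g j \ {i} ⊆ nbrs g i := htwin ▸ sdiff_subset
  by_cases hsub : C.erase j ⊆ nbrs g i
  · exact hS1 j (cnVul_of_erase_subset_nbrs hC hiC hij.ne hsub (htwin ▸ hlt))
  obtain ⟨v, hvC, hvi⟩ : ∃ v ∈ C, v ∉ nbrs g i :=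
    let ⟨v, hv, hvi⟩ := not_subset.1 hsub; ⟨v, mem_of_mem_erase hv, hvi⟩
  have hjC : j ∉ C := fun hjC => hsub (erase_subset_nbrs_of_subset hC hjC hiC hN)
  have h_add : ((nbrs g i ∩ C).card + 2 : ℝ) ≤ γ * (1 + ((nbrs g i \ {j}) \ C).card) := by
    by_contra! h
    exact hS2 i v (fun h => hiC (h ▸ hvC)) (fun h => hvi (mem_nbrs.2 h)) j
      (cnVul_addE_of_not_mem_nbrs hC hvC hiC hjC hij.ne hvi hN (htwin ▸ h))
  have h_deg : (nbrs g i).card ≤ (nbrs g i ∩ C).card + ((nbrs g i \ {j}) \ C).card + 1 := calc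
    _ = (nbrs g i ∩ C).card + (nbrs g i \ C).card := (card_inter_add_card_sdiff _ _).symm
    _ ≤ _ := by
      rw [add_assoc, sdiff_right_comm, ← card_singleton j]
      exact Nat.add_le_add_left card_le_card_sdiff_add_card _
  exact hS1 v (cnVul_of_mem_of_card_nbrs_le hγ hC hvC ((hmax v).trans h_deg) h_add hlt)

/-- Claim 3: if `g` is CN-war-stable, `i` has maximum degree and `ij ∈ g`,
then `N_i(g) \ {j} ≠ N_j(g) \ {i}`. -/
theorem claim_three {n : ℕ} (hn : 3 ≤ n) (γ : ℝ) (hγ : 1 ≤ γ)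
    (g : SimpleGraph (Fin n)) (hstable : CNWarStable g γ)
    (i j : Fin n) (hmax : ∀ v : Fin n, (nbrs g v).card ≤ (nbrs g i).card)
    (hij : g.Adj i j) :
    nbrs g i \ {j} ≠ nbrs g j \ {i} :=
  claim_three_general γ hγ g hstable i j hmax hij
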